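/- arXiv:1304.1315 — 2 statements merged into one kernel-verified Lean document; each statement's English description precedes it below -/
import Mathlib

section
/- Let k be odd and let G=(V,E) be a k-uniform connected nontrivial hypergraph with Laplacian tensor L and signless Laplacian tensor Q. Then λ(L) < λ(Q). -/
open Finset

variable {α : Type*} [DecidableEq α]

/-- The degree of a vertex `i`: the number of edges containing `i`. -/
def hdeg (E : Finset (Finset α)) (i : α) : ℕ := (E.filter (fun e => i ∈ e)).card

/-- The action of the Laplacian tensor: `(L x^{k-1})_i`. -/
def lapAct (k : ℕ) (E : Finset (Finset α)) (x : α → ℝ) (i : α) : ℝ :=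
  (hdeg E i : ℝ) * x i ^ (k - 1) - ∑ e ∈ E.filter (fun e => i ∈ e), ∏ j ∈ e.erase i, x j

/-- The action of the signless Laplacian tensor: `(Q x^{k-1})_i`. -/
def signAct (k : ℕ) (E : Finset (Finset α)) (x : α → ℝ) (i : α) : ℝ :=
  (hdeg E i : ℝ) * x i ^ (k - 1) + ∑ e ∈ E.filter (fun e => i ∈ e), ∏ j ∈ e.erase i, x j

/-- The action of the adjacency tensor: `(A x^{k-1})_i`. -/
def adjAct (E : Finset (Finset α)) (x : α → ℝ) (i : α) : ℝ :=
  ∑ e ∈ E.filter (fun e => i ∈ e), ∏ j ∈ e.erase i, x j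

/-- `lam` is an H-eigenvalue of the Laplacian tensor. -/
def IsLapEig (k : ℕ) (E : Finset (Finset α)) (lam : ℝ) : Prop :=
  ∃ x : α → ℝ, x ≠ 0 ∧ ∀ i, lapAct k E x i = lam * x i ^ (k - 1)

/-- `lam` is the largest H-eigenvalue of the Laplacian tensor. -/
def IsLargestLapEig (k : ℕ) (E : Finset (Finset α)) (lam : ℝ) : Prop :=
  IsLapEig k E lam ∧ ∀ mu : ℝ, IsLapEig k E mu → mu ≤ lam

/-- `lam` is an H-eigenvalue of the signless Laplacian tensor. -/
def IsSignEig (k : ℕ) (E : Finset (Finset α)) (lam : ℝ) : Prop :=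
  ∃ x : α → ℝ, x ≠ 0 ∧ ∀ i, signAct k E x i = lam * x i ^ (k - 1)

/-- `lam` is the largest H-eigenvalue of the signless Laplacian tensor. -/
def IsLargestSignEig (k : ℕ) (E : Finset (Finset α)) (lam : ℝ) : Prop :=
  IsSignEig k E lam ∧ ∀ mu : ℝ, IsSignEig k E mu → mu ≤ lam

/-- `lam` is an H-eigenvalue of the adjacency tensor. -/
def IsAdjEig (k : ℕ) (E : Finset (Finset α)) (lam : ℝ) : Prop :=
  ∃ x : α → ℝ, x ≠ 0 ∧ ∀ i, adjAct E x i = lam * x i ^ (k - 1)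

/-- `lam` is the largest H-eigenvalue of the adjacency tensor. -/
def IsLargestAdjEig (k : ℕ) (E : Finset (Finset α)) (lam : ℝ) : Prop :=
  IsAdjEig k E lam ∧ ∀ mu : ℝ, IsAdjEig k E mu → mu ≤ lam

/-- `G = (V, E)` is a `k`-uniform hyperstar of size `d`: there is a heart `h` and a
disjoint partition of the remaining vertices into `d` parts of size `k-1`, the edges
being the heart together with one part. -/
def IsHyperstar (k d : ℕ) (E : Finset (Finset α)) : Prop :=
  ∃ (h : α) (P : Fin d → Finset α),
    (∀ i, h ∉ P i) ∧
    (∀ i, (P i).card = k - 1) ∧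
    (∀ i j, i ≠ j → Disjoint (P i) (P j)) ∧
    (∀ v : α, v ≠ h → ∃ i, v ∈ P i) ∧
    E = Finset.image (fun i => insert h (P i)) Finset.univ

/-- The hypergraph is connected: any two distinct vertices are joined by a chain of
pairwise intersecting edges. -/
def IsConnectedH (E : Finset (Finset α)) : Prop :=
  ∀ i j : α, i ≠ j → Relation.TransGen (fun a b : α => ∃ e ∈ E, a ∈ e ∧ b ∈ e) i j

/-- For `k` even: the hypergraph is odd-bipartite. -/
def IsOddBipartite [Fintype α] (E : Finset (Finset α)) : Prop :=
  E = ∅ ∨ ∃ V₁ : Finset α, V₁ ≠ ∅ ∧ V₁ ≠ Finset.univ ∧ ∀ e ∈ E, Odd (e ∩ V₁).card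

/-- `G = (V, E)` is a `k`-uniform hypercycle of size `s`. -/
def IsHypercycle (k : ℕ) (s : ℕ) [NeZero s] (E : Finset (Finset α)) : Prop :=
  ∃ P : Fin s → Finset α,
    (∀ i, (P i).card = k) ∧
    (∀ v : α, ∃ i, v ∈ P i) ∧
    E = Finset.image P Finset.univ ∧
    (∀ i : Fin s, (P i ∩ P (i + 1)).card = 1) ∧
    (∀ i j : Fin s, i ≠ j → j ≠ i + 1 → i ≠ j + 1 → P i ∩ P j = ∅) ∧
    Function.Injective (fun i : Fin s => P i ∩ P (i + 1))

/-! If `x` is an H-eigenvector of `L` for `λ(L)`, then, `k - 1` being even,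
`λ(L) ∑ |x_i|^k ≤ Q|x|^k`. The maximum of the Rayleigh quotient `Q y^k / ∑ y_i^k` over the
nonnegative orthant is attained at an H-eigenvector of `Q`, hence is at most `λ(Q)`; so if
`λ(Q) ≤ λ(L)`, the vector `|x|` is a maximizer. On a connected hypergraph a maximizer is
positive, and comparing the eigen-equations of `L` at `x` and of `Q` at `|x|` forces
`∏_{j ∈ e \ {i}} x_j < 0` for every edge `e` and every `i ∈ e`. But the product of these `k`
numbers is `(∏_{j ∈ e} x_j)^(k-1) ≥ 0`, while a product of an odd number of negative reals is
negative. -/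

section

variable {ι : Type*} [Fintype ι] {k : ℕ}

def powSum (k : ℕ) (y : ι → ℝ) : ℝ := ∑ i, y i ^ k

lemma powSum_nonneg {y : ι → ℝ} (hy : 0 ≤ y) : 0 ≤ powSum k y :=
  sum_nonneg fun i _ => pow_nonneg (hy i) k

lemma powSum_smul (c : ℝ) (y : ι → ℝ) : powSum k (c • y) = c ^ k * powSum k y := by
  simp only [powSum, Pi.smul_apply, smul_eq_mul, mul_pow, mul_sum]

lemma powSum_pos {y : ι → ℝ} (hy : 0 ≤ y) (hy0 : y ≠ 0) : 0 < powSum k y := by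
  obtain ⟨i, hi⟩ := Function.ne_iff.mp hy0
  exact sum_pos' (fun j _ => pow_nonneg (hy j) k) ⟨i, mem_univ i, pow_pos ((hy i).lt_of_ne' hi) k⟩

lemma isCompact_powSum_eq_one (hk : k ≠ 0) :
    IsCompact {y : ι → ℝ | 0 ≤ y ∧ powSum k y = 1} := by
  refine (isCompact_univ_pi fun _ => isCompact_Icc (a := (0 : ℝ)) (b := 1)).of_isClosed_subset
    ?_ fun y ⟨hy, hy1⟩ i _ => ⟨hy i, ?_⟩
  · exact isClosed_le continuous_const continuous_id |>.inter <|
      isClosed_eq (continuous_finsetSum _ fun i _ => (continuous_apply i).pow k) continuous_const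
  · refine (pow_le_one_iff_of_nonneg (hy i) hk).mp ?_
    rw [← hy1]
    exact single_le_sum (f := fun j => y j ^ k) (fun j _ => pow_nonneg (hy j) k) (mem_univ i)

lemma powSum_update [DecidableEq ι] (y : ι → ℝ) (i : ι) (s : ℝ) :
    powSum k (Function.update y i s) = powSum k y + (s ^ k - y i ^ k) := by
  rw [powSum, powSum, ← add_sum_erase _ _ (mem_univ i), ← add_sum_erase _ _ (mem_univ i),
    Function.update_self,
    sum_congr rfl fun j hj => by rw [Function.update_of_ne (ne_of_mem_erase hj)]]
  ring

end

section

variable [Fintype α] {k : ℕ} {E : Finset (Finset α)} {lam : ℝ} {y : α → ℝ}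

/-- `Q y^k` for the signless Laplacian tensor `Q`. -/
def signForm (k : ℕ) (E : Finset (Finset α)) (y : α → ℝ) : ℝ :=
  ∑ i, (hdeg E i : ℝ) * y i ^ k + k * ∑ e ∈ E, ∏ j ∈ e, y j

/-- `y` maximizes the Rayleigh quotient `Q z^k / ∑ z_i^k` over the nonnegative orthant,
with maximum `lam`. -/
def IsSignMaximizer (k : ℕ) (E : Finset (Finset α)) (lam : ℝ) (y : α → ℝ) : Prop :=
  0 ≤ y ∧ signForm k E y = lam * powSum k y ∧
    ∀ z : α → ℝ, 0 ≤ z → signForm k E z ≤ lam * powSum k z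

lemma signForm_smul (hunif : ∀ e ∈ E, e.card = k) (c : ℝ) (y : α → ℝ) :
    signForm k E (c • y) = c ^ k * signForm k E y := by
  have hprod : ∀ e ∈ E, ∏ j ∈ e, (c • y) j = c ^ k * ∏ j ∈ e, y j := fun e he => by
    simp only [Pi.smul_apply, smul_eq_mul, prod_mul_distrib, prod_const, hunif e he]
  unfold signForm
  rw [sum_congr rfl hprod, ← mul_sum]
  simp only [Pi.smul_apply, smul_eq_mul, mul_pow, mul_left_comm _ (c ^ k), ← mul_sum]
  ring

lemma sum_mul_signAct (hk : k ≠ 0) (hunif : ∀ e ∈ E, e.card = k) (y : α → ℝ) :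
    ∑ i, y i * signAct k E y i = signForm k E y := by
  have hterm : ∀ i, y i * signAct k E y i =
      (hdeg E i : ℝ) * y i ^ k + ∑ e ∈ E, if i ∈ e then ∏ j ∈ e, y j else 0 := fun i => by
    rw [signAct, mul_add, mul_left_comm, ← pow_succ', Nat.sub_add_cancel (by omega),
      mul_sum, ← sum_filter]
    congr 1
    exact sum_congr rfl fun e he => mul_prod_erase _ _ (mem_filter.mp he).2
  simp only [hterm, sum_add_distrib, signForm]
  rw [sum_comm, mul_sum]
  refine congrArg _ (sum_congr rfl fun e he => ?_)
  rw [sum_ite_mem, univ_inter, sum_const, nsmul_eq_mul, hunif e he]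

lemma signForm_update (y : α → ℝ) (i : α) (s : ℝ) :
    signForm k E (Function.update y i s) =
      signForm k E y + hdeg E i * (s ^ k - y i ^ k) + k * ((s - y i) * adjAct E y i) := by
  have hprod : ∀ e ∈ E, ∏ j ∈ e, Function.update y i s j =
      ∏ j ∈ e, y j + if i ∈ e then (s - y i) * ∏ j ∈ e.erase i, y j else 0 := fun e _ => by
    split_ifs with hi
    · rw [prod_update_of_mem hi, sdiff_singleton_eq_erase, ← mul_prod_erase _ _ hi]
      ring
    · rw [prod_update_of_notMem hi, add_zero]
  simp only [signForm, Function.apply_update (fun j t => (hdeg E j : ℝ) * t ^ k),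
    sum_update_of_mem (mem_univ i), sdiff_singleton_eq_erase,
    ← add_sum_erase _ (fun j => (hdeg E j : ℝ) * y j ^ k) (mem_univ i), sum_congr rfl hprod,
    sum_add_distrib, ← sum_filter, adjAct]
  rw [← mul_sum]
  ring

lemma signForm_add_le {y z : α → ℝ} (hy : 0 ≤ y) (hyz : y ≤ z) {e : Finset α} (he : e ∈ E) :
    signForm k E y + k * (∏ j ∈ e, z j - ∏ j ∈ e, y j) ≤ signForm k E z := by
  have hdeg_le : ∑ i, (hdeg E i : ℝ) * y i ^ k ≤ ∑ i, (hdeg E i : ℝ) * z i ^ k :=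
    sum_le_sum fun i _ => by gcongr; exacts [hy i, hyz i]
  have hprod_le : ∀ f ∈ E, ∏ j ∈ f, y j ≤ ∏ j ∈ f, z j := fun f _ =>
    prod_le_prod (fun j _ => hy j) (fun j _ => hyz j)
  have hedge : ∏ j ∈ e, z j - ∏ j ∈ e, y j ≤ ∑ f ∈ E, ∏ j ∈ f, z j - ∑ f ∈ E, ∏ j ∈ f, y j := by
    rw [← sum_sub_distrib]
    exact single_le_sum (f := fun f => ∏ j ∈ f, z j - ∏ j ∈ f, y j)
      (fun f hf => sub_nonneg.mpr (hprod_le f hf)) he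
  unfold signForm
  nlinarith [Nat.cast_nonneg (α := ℝ) k]

theorem exists_isSignMaximizer [Nonempty α] (hk : k ≠ 0) (hunif : ∀ e ∈ E, e.card = k) :
    ∃ lam y, IsSignMaximizer k E lam y ∧ y ≠ 0 := by
  obtain ⟨a⟩ := ‹Nonempty α›
  have hne : (Pi.single a 1 : α → ℝ) ∈ {y : α → ℝ | 0 ≤ y ∧ powSum k y = 1} :=
    ⟨Pi.single_nonneg.mpr zero_le_one, by simp [powSum, Pi.single_apply, zero_pow hk]⟩
  have hcont : Continuous (signForm (α := α) k E) := by unfold signForm; fun_prop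
  obtain ⟨y, ⟨hy, hy1⟩, hmax⟩ :=
    (isCompact_powSum_eq_one hk).exists_isMaxOn ⟨_, hne⟩ hcont.continuousOn
  refine ⟨signForm k E y, y, ⟨hy, by rw [hy1, mul_one], fun z hz => ?_⟩, ?_⟩
  · rcases eq_or_ne z 0 with rfl | hz0
    · simpa [powSum, zero_pow hk] using (signForm_smul hunif 0 (0 : α → ℝ)).le
    have hzpos := powSum_pos (k := k) hz hz0
    set c := powSum k z ^ (k⁻¹ : ℝ)
    have hc : c ^ k = powSum k z := Real.rpow_inv_natCast_pow hzpos.le hk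
    have hcpos : 0 < c := Real.rpow_pos_of_pos hzpos _
    have hw : signForm k E (c⁻¹ • z) ≤ signForm k E y :=
      hmax ⟨smul_nonneg (inv_nonneg.mpr hcpos.le) hz,
        by rw [powSum_smul, inv_pow, hc, inv_mul_cancel₀ hzpos.ne']⟩
    rw [signForm_smul hunif, inv_pow, hc, inv_mul_le_iff₀ hzpos] at hw
    rwa [mul_comm]
  · rintro rfl
    simp [powSum, zero_pow hk] at hy1

lemma IsSignMaximizer.of_le {mu : ℝ} {z : α → ℝ} (h : IsSignMaximizer k E lam y)
    (hle : lam ≤ mu) (hz : 0 ≤ z) (hmu : mu * powSum k z ≤ signForm k E z) :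
    IsSignMaximizer k E mu z := by
  have hmax : ∀ w : α → ℝ, 0 ≤ w → signForm k E w ≤ mu * powSum k w := fun w hw =>
    (h.2.2 w hw).trans (mul_le_mul_of_nonneg_right hle (powSum_nonneg hw))
  exact ⟨hz, le_antisymm (hmax z hz) hmu, hmax⟩

end

lemma HasDerivAt.nonpos_of_isMaxOn_Ici {f : ℝ → ℝ} {f' a t : ℝ} (hf : HasDerivAt f f' t)
    (hmax : IsMaxOn f (Set.Ici a) t) (ht : a ≤ t) : f' ≤ 0 := by
  have h1 : (1 : ℝ) ∈ posTangentConeAt (Set.Ici a) t :=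
    mem_posTangentConeAt_of_segment_subset <| by
      rw [segment_eq_Icc (by linarith)]
      exact Set.Icc_subset_Ici_iff (by linarith) |>.mpr ht
  simpa using hmax.localize.hasFDerivWithinAt_nonpos hf.hasDerivWithinAt.hasFDerivWithinAt h1

lemma nonpos_of_forall_le_mul_pow {a b : ℝ} {j : ℕ} (hj : j ≠ 0)
    (h : ∀ ε ∈ Set.Ioo (0 : ℝ) 1, a ≤ b * ε ^ j) : a ≤ 0 := by
  have hlim : Filter.Tendsto (fun ε : ℝ => b * ε ^ j) (nhdsWithin 0 (Set.Ioi 0)) (nhds 0) :=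
    ((by fun_prop : Continuous fun ε : ℝ => b * ε ^ j).tendsto' 0 0
      (by simp [zero_pow hj])).mono_left nhdsWithin_le_nhds
  exact ge_of_tendsto hlim (Filter.eventually_of_mem (Ioo_mem_nhdsGT one_pos) h)

lemma IsConnectedH.imp_of_forall_edge {V : Type*} {E : Finset (Finset V)} (hE : IsConnectedH E)
    {p : V → Prop} (hp : ∀ e ∈ E, ∀ a ∈ e, ∀ b ∈ e, p a → p b) {a b : V} (ha : p a) : p b := by
  obtain rfl | hab := eq_or_ne a b
  · exact ha
  have hchain := hE a b hab
  clear hab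
  induction hchain with
  | single h =>
    obtain ⟨e, he, hae, hbe⟩ := h
    exact hp e he _ hae _ hbe ha
  | tail _ h ih =>
    obtain ⟨e, he, hce, hbe⟩ := h
    exact hp e he _ hce _ hbe ih

section

variable [Fintype α] {k : ℕ} {E : Finset (Finset α)} {lam : ℝ} {y : α → ℝ}

theorem IsSignMaximizer.signAct_eq (hk : 2 ≤ k) (h : IsSignMaximizer k E lam y) (i : α) :
    signAct k E y i = lam * y i ^ (k - 1) := by
  obtain ⟨hy, hyeq, hmax⟩ := h
  set B := adjAct E y i
  set ψ : ℝ → ℝ := fun s =>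
    signForm k E (Function.update y i s) - lam * powSum k (Function.update y i s)
  have hψ : ψ = fun s => (hdeg E i - lam) * (s ^ k - y i ^ k) + k * ((s - y i) * B) := by
    funext s
    simp only [ψ, signForm_update, powSum_update, hyeq]
    ring
  have hψmax : IsMaxOn ψ (Set.Ici 0) (y i) := fun s (hs : 0 ≤ s) => by
    have hys : 0 ≤ Function.update y i s := fun j => by
      rcases eq_or_ne j i with rfl | hj
      · simpa using hs
      · simpa [hj] using hy j
    have := hmax _ hys
    show ψ s ≤ ψ (y i)
    simp only [ψ, Function.update_eq_self, hyeq, sub_self]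
    linarith
  have hderiv : HasDerivAt ψ (k * ((hdeg E i - lam) * y i ^ (k - 1) + B)) (y i) := by
    rw [hψ]
    refine ((((hasDerivAt_pow k (y i)).sub_const (y i ^ k)).const_mul ((hdeg E i : ℝ) - lam)).add
      ((((hasDerivAt_id' (y i)).sub_const (y i)).mul_const B).const_mul (k : ℝ))).congr_deriv ?_
    ring
  suffices hD : (hdeg E i - lam) * y i ^ (k - 1) + B = 0 by
    show (hdeg E i : ℝ) * y i ^ (k - 1) + B = _
    linarith
  have hk0 : (0 : ℝ) < k := by positivity
  have hyi : 0 ≤ y i := hy i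
  rcases hyi.eq_or_lt with h0 | hpos
  · have hB : 0 ≤ B := sum_nonneg fun e _ => prod_nonneg fun j _ => hy j
    have hder := hderiv.nonpos_of_isMaxOn_Ici hψmax hyi
    rw [← h0, zero_pow (by omega), mul_zero, zero_add] at hder ⊢
    exact le_antisymm (nonpos_of_mul_nonpos_right hder hk0) hB
  · have := (hψmax.localize.isLocalMax (Ici_mem_nhds hpos)).hasDerivAt_eq_zero hderiv
    exact (mul_eq_zero.mp this).resolve_left hk0.ne'

/-- Raising the zero coordinates of a maximizer to `ε` gains order `ε ^ m` on an edge with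
`0 < m < k` zeros, but costs only order `ε ^ k` in the normalization. -/
theorem IsSignMaximizer.eq_zero_of_mem_edge (hunif : ∀ e ∈ E, e.card = k)
    (h : IsSignMaximizer k E lam y) {e : Finset α} (he : e ∈ E) {a b : α} (ha : a ∈ e)
    (hb : b ∈ e) (hya : y a = 0) : y b = 0 := by
  obtain ⟨hy, hyeq, hmax⟩ := h
  by_contra hyb
  set Z := univ.filter fun j => y j = 0
  set m := (e.filter fun j => y j = 0).card
  set P := ∏ j ∈ e.filter (fun j => ¬y j = 0), y j
  have hP : 0 < P := prod_pos fun j hj => (hy j).lt_of_ne' (mem_filter.mp hj).2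
  have hmk : m < k := hunif e he ▸ card_lt_card (filter_ssubset.mpr ⟨b, hb, hyb⟩)
  have hm : m ≠ 0 := (card_pos.mpr ⟨a, mem_filter.mpr ⟨ha, hya⟩⟩).ne'
  have hbound : ∀ ε ∈ Set.Ioo (0 : ℝ) 1, k * P ≤ lam * Z.card * ε ^ (k - m) := by
    rintro ε ⟨hε, -⟩
    set z : α → ℝ := fun j => if y j = 0 then ε else y j
    have hyz : y ≤ z := fun j => by by_cases hj : y j = 0 <;> simp [z, hj, hε.le]
    have hz : powSum k z = powSum k y + Z.card * ε ^ k := by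
      have hterm : ∀ j, z j ^ k = y j ^ k + if y j = 0 then ε ^ k else 0 := fun j => by
        by_cases hj : y j = 0 <;> simp [z, hj, zero_pow (show k ≠ 0 by omega)]
      simp only [powSum, hterm, sum_add_distrib, ← sum_filter, sum_const, nsmul_eq_mul, Z]
    have hze : ∏ j ∈ e, z j = ε ^ m * P := by
      rw [← prod_filter_mul_prod_filter_not e fun j => y j = 0]
      congr 1
      · rw [prod_congr rfl fun j hj => if_pos (mem_filter.mp hj).2, prod_const]
      · exact prod_congr rfl fun j hj => if_neg (mem_filter.mp hj).2
    have hgain := (signForm_add_le hy hyz he).trans (hmax z (hy.trans hyz))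
    rw [hyeq, hz, hze, prod_eq_zero ha hya,
      show ε ^ k = ε ^ m * ε ^ (k - m) by rw [← pow_add]; congr; omega] at hgain
    refine le_of_mul_le_mul_left ?_ (pow_pos hε m)
    linear_combination hgain
  have hk : (0 : ℝ) < k := by norm_cast; omega
  exact hP.not_ge <| nonpos_of_mul_nonpos_right (nonpos_of_forall_le_mul_pow (by omega) hbound) hk

theorem IsSignMaximizer.pos (hunif : ∀ e ∈ E, e.card = k) (hconn : IsConnectedH E)
    (h : IsSignMaximizer k E lam y) (hy0 : y ≠ 0) (i : α) : 0 < y i := by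
  refine (h.1 i).lt_of_ne' fun hyi => hy0 (funext fun j => ?_)
  exact hconn.imp_of_forall_edge (p := fun j => y j = 0)
    (fun e he a ha b hb => h.eq_zero_of_mem_edge hunif he ha hb) hyi

end

lemma Finset.exists_pos_prod_erase_of_odd_card {ι : Type*} [DecidableEq ι] {s : Finset ι}
    (hs : Odd s.card) {x : ι → ℝ} (hx : ∀ i ∈ s, x i ≠ 0) :
    ∃ i ∈ s, 0 < ∏ j ∈ s.erase i, x j := by
  by_contra! hnonpos
  have hneg : ∀ i ∈ s, ∏ j ∈ s.erase i, x j < 0 := fun i hi =>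
    (hnonpos i hi).lt_of_ne (prod_ne_zero_iff.mpr fun j hj => hx j (mem_of_mem_erase hj))
  set P := ∏ j ∈ s, x j
  set Q := ∏ i ∈ s, ∏ j ∈ s.erase i, x j
  have hPQ : P * Q = P * P ^ (s.card - 1) := by
    rw [← pow_succ', Nat.sub_add_cancel hs.pos]
    calc P * Q = ∏ i ∈ s, x i * ∏ j ∈ s.erase i, x j := prod_mul_distrib.symm
      _ = P ^ s.card := by rw [prod_congr rfl fun i hi => mul_prod_erase s x hi, prod_const]
  have hQ : Q = P ^ (s.card - 1) := mul_left_cancel₀ (prod_ne_zero_iff.mpr hx) hPQ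
  have hQneg : Q < 0 := by
    have hQ' : Q = (-1) ^ s.card * ∏ i ∈ s, -∏ j ∈ s.erase i, x j := by
      rw [← prod_neg, prod_congr rfl fun i _ => neg_neg _]
    rw [hQ', hs.neg_one_pow, neg_one_mul, neg_lt_zero]
    exact prod_pos fun i hi => neg_pos.mpr (hneg i hi)
  exact hQneg.not_ge (hQ ▸ (Nat.Odd.sub_odd hs odd_one).pow_nonneg P)

section

variable {k : ℕ} {E : Finset (Finset α)}

lemma lapAct_le_signAct_abs (hk : Odd k) (x : α → ℝ) (i : α) :
    lapAct k E x i ≤ signAct k E |x| i := by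
  have hsum : -∑ e ∈ E.filter (fun e => i ∈ e), ∏ j ∈ e.erase i, x j ≤
      ∑ e ∈ E.filter (fun e => i ∈ e), ∏ j ∈ e.erase i, |x j| :=
    (neg_le_abs _).trans <| (abs_sum_le_sum_abs _ _).trans <|
      sum_le_sum fun e _ => (abs_prod _ _).le
  simp only [lapAct, signAct, Pi.abs_apply, (Nat.Odd.sub_odd hk odd_one).pow_abs]
  linarith

lemma prod_erase_nonpos_of_lapAct_eq_signAct_abs (hk : Odd k) {x : α → ℝ} {i : α}
    (h : lapAct k E x i = signAct k E |x| i) {e : Finset α} (he : e ∈ E) (hi : i ∈ e) :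
    ∏ j ∈ e.erase i, x j ≤ 0 := by
  simp only [lapAct, signAct, Pi.abs_apply, (Nat.Odd.sub_odd hk odd_one).pow_abs] at h
  have hsum : ∑ f ∈ E.filter (fun f => i ∈ f),
      (∏ j ∈ f.erase i, x j + ∏ j ∈ f.erase i, |x j|) = 0 := by
    rw [sum_add_distrib]
    linarith
  have hterm := (sum_eq_zero_iff_of_nonneg fun f _ => ?_).mp hsum e (mem_filter.mpr ⟨he, hi⟩)
  · linarith [prod_nonneg fun j (_ : j ∈ e.erase i) => abs_nonneg (x j)]
  · rw [← abs_prod]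
    linarith [neg_abs_le (∏ j ∈ f.erase i, x j)]

lemma mul_powSum_abs_le_signForm [Fintype α] (hk : Odd k) (hunif : ∀ e ∈ E, e.card = k)
    {lam : ℝ} {x : α → ℝ} (hx : ∀ i, lapAct k E x i = lam * x i ^ (k - 1)) :
    lam * powSum k |x| ≤ signForm k E |x| := by
  rw [← sum_mul_signAct hk.pos.ne' hunif, powSum, mul_sum]
  refine sum_le_sum fun i _ => ?_
  calc lam * |x| i ^ k = |x| i * lapAct k E x i := by
        rw [hx, Pi.abs_apply, ← (Nat.Odd.sub_odd hk odd_one).pow_abs, mul_left_comm, ← pow_succ',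
          Nat.sub_one_add_one hk.pos.ne']
    _ ≤ |x| i * signAct k E |x| i :=
        mul_le_mul_of_nonneg_left (lapAct_le_signAct_abs hk x i) (abs_nonneg _)

end

theorem largest_lap_lt_largest_sign_odd_general {n k : ℕ} (hk : 3 ≤ k)
    (hkodd : Odd k) (E : Finset (Finset (Fin n))) (hunif : ∀ e ∈ E, e.card = k)
    (hconn : IsConnectedH E) (hnontriv : E ≠ ∅)
    (lamL lamQ : ℝ) (hL : IsLargestLapEig k E lamL) (hQ : IsLargestSignEig k E lamQ) :
    lamL < lamQ := by
  obtain ⟨⟨x, hx0, hx⟩, -⟩ := hL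
  by_contra! hQL
  obtain ⟨i₀, -⟩ := Function.ne_iff.mp hx0
  have : Nonempty (Fin n) := ⟨i₀⟩
  obtain ⟨lamS, y, hy, hy0⟩ := exists_isSignMaximizer (by omega) hunif
  have hSQ : lamS ≤ lamQ := hQ.2 _ ⟨y, hy0, hy.signAct_eq (by omega)⟩
  have hmax : IsSignMaximizer k E lamL |x| :=
    hy.of_le (hSQ.trans hQL) (abs_nonneg x) (mul_powSum_abs_le_signForm hkodd hunif hx)
  have hxe : ∀ j, x j ≠ 0 := fun j =>
    abs_pos.mp (hmax.pos hunif hconn (by simpa using hx0) j)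
  obtain ⟨e, he⟩ := nonempty_iff_ne_empty.mpr hnontriv
  obtain ⟨i, hi, hpos⟩ :=
    exists_pos_prod_erase_of_odd_card (by rwa [hunif e he]) fun j _ => hxe j
  have hLQ : lapAct k E x i = signAct k E |x| i := by
    rw [hx, hmax.signAct_eq (by omega), Pi.abs_apply, (Nat.Odd.sub_odd hkodd odd_one).pow_abs]
  exact (prod_erase_nonpos_of_lapAct_eq_signAct_abs hkodd hLQ he hi).not_gt hpos

/-- For `k` odd and a `k`-uniform connected nontrivial hypergraph with
Laplacian tensor `L` and signless Laplacian tensor `Q`, we have `λ(L) < λ(Q)`. -/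
theorem largest_lap_lt_largest_sign_odd {n k : ℕ} (hk : 3 ≤ k) (hkn : k ≤ n)
    (hkodd : Odd k) (E : Finset (Finset (Fin n))) (hunif : ∀ e ∈ E, e.card = k)
    (hconn : IsConnectedH E) (hnontriv : E ≠ ∅)
    (lamL lamQ : ℝ) (hL : IsLargestLapEig k E lamL) (hQ : IsLargestSignEig k E lamQ) :
    lamL < lamQ :=
  largest_lap_lt_largest_sign_odd_general hk hkodd E hunif hconn hnontriv lamL lamQ hL hQ
end

section
/- Let k be even and let G=(V,E) be a k-uniform hyperstar of size d>0 with Laplacian tensor L. Then λ(L) > d. -/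
open Finset

variable {α : Type*} [DecidableEq α]

/-!
Put the value `a` on the heart of the hyperstar, `1` on the vertices of one petal and `0`
elsewhere. Every eigen-equation is then satisfied with eigenvalue `1 - a` except the one at
the heart, which reduces to `(d - 1 + a) * a ^ (k - 1) = 1`. Since `k - 1` is odd, this
equation has a root `a < 1 - d`, which yields an H-eigenvalue `1 - a > d`.
-/

lemma exists_gt_sub_mul_pow_eq_one {t : ℝ} (ht : 0 ≤ t) (m : ℕ) :
    ∃ b, t < b ∧ (b - t) * b ^ m = 1 := by
  have hcont : Continuous fun b : ℝ => (b - t) * b ^ m := by fun_prop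
  have hone : (1 : ℝ) ≤ (t + 1 - t) * (t + 1) ^ m := by
    rw [add_sub_cancel_left, one_mul]
    exact one_le_pow₀ (by linarith)
  obtain ⟨b, hb, hb_eq⟩ :=
    intermediate_value_Icc (by linarith : t ≤ t + 1) hcont.continuousOn ⟨by simp, hone⟩
  refine ⟨b, lt_of_le_of_ne hb.1 ?_, hb_eq⟩
  rintro rfl
  simp at hb_eq

lemma exists_lt_neg_add_mul_pow_eq_one {t : ℝ} (ht : 0 ≤ t) {m : ℕ} (hm : Odd m) :
    ∃ a, a < -t ∧ (t + a) * a ^ m = 1 := by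
  obtain ⟨b, htb, hb⟩ := exists_gt_sub_mul_pow_eq_one ht m
  refine ⟨-b, by linarith, ?_⟩
  rw [hm.neg_pow]
  linear_combination hb

lemma index_eq_of_mem {ι β : Type*} {Q : ι → Finset β}
    (hdisj : ∀ i j, i ≠ j → Disjoint (Q i) (Q j)) {v : β} {i j : ι}
    (hi : v ∈ Q i) (hj : v ∈ Q j) : i = j := by
  by_contra hij
  exact disjoint_left.mp (hdisj i j hij) hi hj

section Hyperstar

variable {d : ℕ} {h : α} {P : Fin d → Finset α}

def starEdges (h : α) (P : Fin d → Finset α) : Finset (Finset α) :=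
  univ.image fun i => insert h (P i)

lemma injective_insert_heart (hhP : ∀ i, h ∉ P i)
    (hdisj : ∀ i j, i ≠ j → Disjoint (P i) (P j)) (hne : ∀ i, (P i).Nonempty) :
    Function.Injective fun i => insert h (P i) := by
  intro i j hij
  obtain ⟨w, hw⟩ := hne i
  have hPij : P i = P j := by
    rw [← erase_insert (hhP i), ← erase_insert (hhP j)]
    exact congrArg (·.erase h) hij
  exact index_eq_of_mem hdisj hw (hPij ▸ hw)

lemma filter_mem_starEdges_heart : (starEdges h P).filter (h ∈ ·) = starEdges h P :=
  filter_true_of_mem fun e he => by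
    obtain ⟨i, -, rfl⟩ := mem_image.mp he
    exact mem_insert_self h (P i)

lemma filter_mem_starEdges_of_mem (hhP : ∀ i, h ∉ P i)
    (hdisj : ∀ i j, i ≠ j → Disjoint (P i) (P j)) {v : α} {i : Fin d} (hv : v ∈ P i) :
    (starEdges h P).filter (v ∈ ·) = {insert h (P i)} := by
  ext e
  simp only [starEdges, mem_filter, mem_image, mem_univ, true_and, mem_singleton]
  constructor
  · rintro ⟨⟨j, rfl⟩, hvj⟩
    obtain rfl | hvj := mem_insert.mp hvj
    · exact absurd hv (hhP i)
    · rw [index_eq_of_mem hdisj hvj hv]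
  · rintro rfl
    exact ⟨⟨i, rfl⟩, mem_insert_of_mem hv⟩

lemma hdeg_starEdges_heart (hhP : ∀ i, h ∉ P i)
    (hdisj : ∀ i j, i ≠ j → Disjoint (P i) (P j)) (hne : ∀ i, (P i).Nonempty) :
    hdeg (starEdges h P) h = d := by
  rw [hdeg, filter_mem_starEdges_heart, starEdges,
    card_image_of_injective _ (injective_insert_heart hhP hdisj hne), card_univ,
    Fintype.card_fin]

lemma hdeg_starEdges_of_mem (hhP : ∀ i, h ∉ P i)
    (hdisj : ∀ i j, i ≠ j → Disjoint (P i) (P j)) {v : α} {i : Fin d} (hv : v ∈ P i) :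
    hdeg (starEdges h P) v = 1 := by
  rw [hdeg, filter_mem_starEdges_of_mem hhP hdisj hv, card_singleton]

lemma lapAct_starEdges_heart (k : ℕ) (x : α → ℝ) (hhP : ∀ i, h ∉ P i)
    (hdisj : ∀ i j, i ≠ j → Disjoint (P i) (P j)) (hne : ∀ i, (P i).Nonempty) :
    lapAct k (starEdges h P) x h = d * x h ^ (k - 1) - ∑ i, ∏ j ∈ P i, x j := by
  rw [lapAct, hdeg_starEdges_heart hhP hdisj hne, filter_mem_starEdges_heart, starEdges,
    sum_image fun i _ j _ hij => injective_insert_heart hhP hdisj hne hij]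
  simp only [erase_insert (hhP _)]

lemma lapAct_starEdges_of_mem (k : ℕ) (x : α → ℝ) (hhP : ∀ i, h ∉ P i)
    (hdisj : ∀ i j, i ≠ j → Disjoint (P i) (P j)) {v : α} {i : Fin d} (hv : v ∈ P i) :
    lapAct k (starEdges h P) x v = x v ^ (k - 1) - x h * ∏ j ∈ (P i).erase v, x j := by
  have hvh : v ≠ h := fun hvh => hhP i (hvh ▸ hv)
  rw [lapAct, hdeg_starEdges_of_mem hhP hdisj hv, filter_mem_starEdges_of_mem hhP hdisj hv,
    sum_singleton, erase_insert_of_ne hvh.symm,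
    prod_insert fun hh => hhP i (mem_of_mem_erase hh), Nat.cast_one, one_mul]

noncomputable def starVec (h : α) (S : Finset α) (a : ℝ) : α → ℝ :=
  Function.update ((S : Set α).indicator 1) h a

lemma starVec_heart (S : Finset α) (a : ℝ) : starVec h S a h = a := by
  simp [starVec]

lemma starVec_of_mem (hhP : ∀ i, h ∉ P i) (hdisj : ∀ i j, i ≠ j → Disjoint (P i) (P j))
    (i₀ : Fin d) (a : ℝ) {j : α} {i : Fin d} (hj : j ∈ P i) :
    starVec h (P i₀) a j = if i = i₀ then 1 else 0 := by
  have hjh : j ≠ h := fun hjh => hhP i (hjh ▸ hj)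
  rw [starVec, Function.update_of_ne hjh]
  by_cases hi : i = i₀
  · subst hi
    simp [hj]
  · have hj₀ : j ∉ P i₀ := fun hj₀ => hi (index_eq_of_mem hdisj hj hj₀)
    simp [hi, hj₀]

lemma prod_starVec (hhP : ∀ i, h ∉ P i) (hdisj : ∀ i j, i ≠ j → Disjoint (P i) (P j))
    (i₀ : Fin d) (a : ℝ) {S : Finset α} {i : Fin d} (hS : S ⊆ P i) (hSne : S.Nonempty) :
    ∏ j ∈ S, starVec h (P i₀) a j = if i = i₀ then 1 else 0 := by
  rw [prod_congr rfl fun j hj => starVec_of_mem hhP hdisj i₀ a (hS hj), prod_const]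
  split_ifs
  · exact one_pow _
  · exact zero_pow hSne.card_pos.ne'

theorem isLapEig_starEdges {k : ℕ} (hk : 3 ≤ k) (hhP : ∀ i, h ∉ P i)
    (hcard : ∀ i, (P i).card = k - 1) (hdisj : ∀ i j, i ≠ j → Disjoint (P i) (P j))
    (hcover : ∀ v, v ≠ h → ∃ i, v ∈ P i) (i₀ : Fin d) {a : ℝ}
    (ha : (d - 1 + a) * a ^ (k - 1) = 1) :
    IsLapEig k (starEdges h P) (1 - a) := by
  have hne : ∀ i, (P i).Nonempty := fun i => card_pos.mp (by rw [hcard]; omega)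
  refine ⟨starVec h (P i₀) a, fun hx => ?_, fun v => ?_⟩
  · obtain ⟨w, hw⟩ := hne i₀
    have hxw := congrFun hx w
    rw [starVec_of_mem hhP hdisj i₀ a hw, if_pos rfl] at hxw
    exact one_ne_zero hxw
  by_cases hvh : v = h
  · subst hvh
    rw [lapAct_starEdges_heart k _ hhP hdisj hne, starVec_heart]
    simp only [prod_starVec hhP hdisj i₀ a subset_rfl (hne _), sum_ite_eq', mem_univ, if_true]
    linear_combination ha
  · obtain ⟨i, hv⟩ := hcover v hvh
    have herase : ((P i).erase v).Nonempty :=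
      card_pos.mp (by rw [card_erase_of_mem hv, hcard]; omega)
    rw [lapAct_starEdges_of_mem k _ hhP hdisj hv, starVec_of_mem hhP hdisj i₀ a hv,
      starVec_heart, prod_starVec hhP hdisj i₀ a (erase_subset v _) herase]
    split_ifs
    · ring
    · simp [zero_pow (by omega : k - 1 ≠ 0)]

end Hyperstar

theorem largest_lap_eig_hyperstar_gt_deg_general {n k d : ℕ} (hk : 3 ≤ k)
    (hkeven : Even k) (hd : 0 < d) (E : Finset (Finset (Fin n)))
    (hstar : IsHyperstar k d E) (lam : ℝ) (hlam : IsLargestLapEig k E lam) :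
    (d : ℝ) < lam := by
  obtain ⟨h, P, hhP, hcard, hdisj, hcover, rfl⟩ := hstar
  have hodd : Odd (k - 1) := Nat.Even.sub_odd (by omega) hkeven odd_one
  have hd_sub : (0 : ℝ) ≤ d - 1 := sub_nonneg.mpr (Nat.one_le_cast.mpr hd)
  obtain ⟨a, ha_lt, ha⟩ := exists_lt_neg_add_mul_pow_eq_one hd_sub hodd
  have hle := hlam.2 _ (isLapEig_starEdges hk hhP hcard hdisj hcover ⟨0, hd⟩ ha)
  linarith

/-- For `k` even and a `k`-uniform hyperstar of size `d > 0` with Laplacian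
tensor `L`, we have `λ(L) > d`. -/
theorem largest_lap_eig_hyperstar_gt_deg {n k d : ℕ} (hk : 3 ≤ k) (hkn : k ≤ n)
    (hkeven : Even k) (hd : 0 < d) (E : Finset (Finset (Fin n)))
    (hstar : IsHyperstar k d E) (lam : ℝ) (hlam : IsLargestLapEig k E lam) :
    (d : ℝ) < lam :=
  largest_lap_eig_hyperstar_gt_deg_general hk hkeven hd E hstar lam hlam
end
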